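/- arXiv:2004.07374 — 6 statements merged into one kernel-verified Lean document; each statement's English description precedes it below -/
import Mathlib

section
/- The Jacobi ring ℂ[x₁,x₂]/(3x₁²x₂, x₁³ + 3x₂²) of the polynomial w = x₁³x₂ + x₂³ is a 7-dimensional ℂ-vector space with basis {1, x₁, x₁², x₁³, x₁⁴, x₂, x₁x₂}. -/
/-!
Write `x, y` for the classes of `X 0, X 1`. Since `3` is invertible, the Jacobian relations say
`x²y = 0` and `3y² = -x³`, hence also `x⁵ = -3x²y² = 0`; so the span of
`1, x, x², x³, x⁴, y, xy` contains `1` and is stable under multiplication by `x` and `y`,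
which makes it everything. For independence, the linear forms `coeff m` (for `m` not divisible
by `x²y`, `x³` or `y²`) and `3 coeff (x^{k+3}) - coeff (x^k y²)` (for `k ≤ 1`) vanish on the
ideal, and they separate the seven monomials.
-/

open MvPolynomial

theorem MvPolynomial.span_eq_top_of_mul_mk_X_mem {R σ : Type*} [CommRing R]
    {I : Ideal (MvPolynomial σ R)} {s : Set (MvPolynomial σ R ⧸ I)}
    (h1 : 1 ∈ Submodule.span R s)
    (hX : ∀ v ∈ s, ∀ i, v * Ideal.Quotient.mk I (X i) ∈ Submodule.span R s) :
    Submodule.span R s = ⊤ := by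
  have hmul : ∀ v ∈ Submodule.span R s, ∀ i,
      v * Ideal.Quotient.mk I (X i) ∈ Submodule.span R s := by
    intro v hv i
    induction hv using Submodule.span_induction with
    | mem v hv => exact hX v hv i
    | zero => simp
    | add _ _ _ _ hx hy => rw [add_mul]; exact add_mem hx hy
    | smul a _ _ hx => rw [smul_mul_assoc]; exact Submodule.smul_mem _ a hx
  rw [Submodule.eq_top_iff']
  intro z
  obtain ⟨p, rfl⟩ := Ideal.Quotient.mk_surjective z
  induction p using MvPolynomial.induction_on with
  | C a =>
    rw [← algebraMap_eq, Ideal.Quotient.mk_algebraMap, Algebra.algebraMap_eq_smul_one]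
    exact Submodule.smul_mem _ a h1
  | add p q hp hq => rw [map_add]; exact add_mem hp hq
  | mul_X p i hp => rw [map_mul]; exact hmul _ hp i

namespace E7

variable {K : Type*} [Field K]

noncomputable def exponent (i j : ℕ) : Fin 2 →₀ ℕ := Finsupp.single 0 i + Finsupp.single 1 j

@[simp] lemma exponent_apply_zero (i j : ℕ) : exponent i j 0 = i := by simp [exponent]
@[simp] lemma exponent_apply_one (i j : ℕ) : exponent i j 1 = j := by simp [exponent]

lemma exponent_le_iff {i j : ℕ} {m : Fin 2 →₀ ℕ} : exponent i j ≤ m ↔ i ≤ m 0 ∧ j ≤ m 1 := by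
  simp [Finsupp.le_def, Fin.forall_fin_two]

lemma exponent_sub (i j k l : ℕ) : exponent i j - exponent k l = exponent (i - k) (j - l) := by
  ext s; fin_cases s <;> simp

lemma exponent_eq_iff {i j k l : ℕ} : exponent i j = exponent k l ↔ i = k ∧ j = l := by
  simp [Finsupp.ext_iff, Fin.forall_fin_two]

lemma monomial_exponent (i j : ℕ) (c : K) :
    monomial (exponent i j) c = C c * X 0 ^ i * X 1 ^ j := by
  simp [exponent, X_pow_eq_monomial, C_mul_monomial, monomial_mul]

variable (K) in
noncomputable def jacobianIdeal : Ideal (MvPolynomial (Fin 2) K) :=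
  Ideal.span {3 * X 0 ^ 2 * X 1, X 0 ^ 3 + 3 * X 1 ^ 2}

lemma coeff_of_mem_jacobianIdeal {p : MvPolynomial (Fin 2) K} (hp : p ∈ jacobianIdeal K) :
    ∃ a b : MvPolynomial (Fin 2) K, ∀ m, coeff m p =
      (if exponent 2 1 ≤ m then coeff (m - exponent 2 1) a * 3 else 0) +
      ((if exponent 3 0 ≤ m then coeff (m - exponent 3 0) b else 0) +
        if exponent 0 2 ≤ m then coeff (m - exponent 0 2) b * 3 else 0) := by
  obtain ⟨a, b, rfl⟩ := Ideal.mem_span_pair.mp hp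
  have hg₁ : (3 * X 0 ^ 2 * X 1 : MvPolynomial (Fin 2) K) = monomial (exponent 2 1) 3 := by
    rw [monomial_exponent, pow_one, map_ofNat]
  have hg₂ : (X 0 ^ 3 + 3 * X 1 ^ 2 : MvPolynomial (Fin 2) K) =
      monomial (exponent 3 0) 1 + monomial (exponent 0 2) 3 := by
    simp only [monomial_exponent, map_one, map_ofNat, pow_zero, one_mul, mul_one]
  refine ⟨a, b, fun m => ?_⟩
  rw [hg₁, hg₂, mul_add, coeff_add, coeff_add, coeff_mul_monomial', coeff_mul_monomial',
    coeff_mul_monomial', mul_one]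

lemma coeff_eq_zero_of_mem_jacobianIdeal {p : MvPolynomial (Fin 2) K} (hp : p ∈ jacobianIdeal K)
    {m : Fin 2 →₀ ℕ} (h₂₁ : ¬ exponent 2 1 ≤ m) (h₃₀ : ¬ exponent 3 0 ≤ m)
    (h₀₂ : ¬ exponent 0 2 ≤ m) : coeff m p = 0 := by
  obtain ⟨a, b, hab⟩ := coeff_of_mem_jacobianIdeal hp
  simp [hab, h₂₁, h₃₀, h₀₂]

lemma coeff_exponent_two_of_mem_jacobianIdeal {p : MvPolynomial (Fin 2) K}
    (hp : p ∈ jacobianIdeal K) {k : ℕ} (hk : k ≤ 1) :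
    coeff (exponent k 2) p = 3 * coeff (exponent (k + 3) 0) p := by
  obtain ⟨a, b, hab⟩ := coeff_of_mem_jacobianIdeal hp
  have h₂ : ¬ 2 ≤ k := by omega
  have h₃ : ¬ 3 ≤ k := by omega
  simp [hab, exponent_le_iff, exponent_sub, h₂, h₃, mul_comm]

variable (K) in
noncomputable def standardMonomials : Fin 7 → MvPolynomial (Fin 2) K :=
  ![1, X 0, X 0 ^ 2, X 0 ^ 3, X 0 ^ 4, X 1, X 0 * X 1]

noncomputable def standardExponents : Fin 7 → Fin 2 →₀ ℕ :=
  ![exponent 0 0, exponent 1 0, exponent 2 0, exponent 3 0, exponent 4 0, exponent 0 1,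
    exponent 1 1]

lemma standardMonomials_eq_monomial (i : Fin 7) :
    standardMonomials K i = monomial (standardExponents i) 1 := by
  fin_cases i <;> simp [standardMonomials, standardExponents, monomial_exponent]

lemma coeff_sum_smul_standardMonomials (c : Fin 7 → K) (m : Fin 2 →₀ ℕ) :
    coeff m (∑ i, c i • standardMonomials K i) =
      ∑ i, if standardExponents i = m then c i else 0 := by
  simp [standardMonomials_eq_monomial, coeff_sum, coeff_monomial]

theorem linearIndependent_standardMonomials (h3 : (3 : K) ≠ 0) :
    LinearIndependent K (Ideal.Quotient.mk (jacobianIdeal K) ∘ standardMonomials K) := by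
  rw [Fintype.linearIndependent_iff]
  intro c hc
  set p := ∑ i, c i • standardMonomials K i
  have hp : p ∈ jacobianIdeal K := by
    rw [← Ideal.Quotient.eq_zero_iff_mem, ← hc, ← Ideal.Quotient.mkₐ_eq_mk K]
    simp [p, map_sum, map_smul]
  have hcoeff (i j : ℕ) : coeff (exponent i j) p =
      ∑ k, if standardExponents k = exponent i j then c k else 0 :=
    coeff_sum_smul_standardMonomials c _
  simp only [Fin.sum_univ_seven, standardExponents] at hcoeff
  have hvanish (i j : ℕ) (h₂₁ : ¬ (2 ≤ i ∧ 1 ≤ j)) (h₃₀ : ¬ 3 ≤ i) (h₀₂ : ¬ 2 ≤ j) :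
      coeff (exponent i j) p = 0 :=
    coeff_eq_zero_of_mem_jacobianIdeal hp (by simpa [exponent_le_iff] using h₂₁)
      (by simpa [exponent_le_iff] using h₃₀) (by simpa [exponent_le_iff] using h₀₂)
  have hx3 := coeff_exponent_two_of_mem_jacobianIdeal hp (k := 0) zero_le_one
  have hx4 := coeff_exponent_two_of_mem_jacobianIdeal hp (k := 1) le_rfl
  intro i
  fin_cases i
  · simpa [hcoeff, exponent_eq_iff] using hvanish 0 0
  · simpa [hcoeff, exponent_eq_iff] using hvanish 1 0
  · simpa [hcoeff, exponent_eq_iff] using hvanish 2 0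
  · simpa [hcoeff, exponent_eq_iff, h3] using hx3.symm
  · simpa [hcoeff, exponent_eq_iff, h3] using hx4.symm
  · simpa [hcoeff, exponent_eq_iff] using hvanish 0 1
  · simpa [hcoeff, exponent_eq_iff] using hvanish 1 1

lemma mk_X0_sq_mul_mk_X1_eq_zero (h3 : (3 : K) ≠ 0) :
    Ideal.Quotient.mk (jacobianIdeal K) (X 0) ^ 2 * Ideal.Quotient.mk (jacobianIdeal K) (X 1) =
      0 := by
  have hunit := (IsUnit.mk0 _ h3).map (algebraMap K (MvPolynomial (Fin 2) K ⧸ jacobianIdeal K))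
  rw [map_ofNat] at hunit
  rw [← hunit.mul_right_eq_zero, ← map_ofNat (Ideal.Quotient.mk (jacobianIdeal K)) 3, ← map_pow,
    ← map_mul, ← map_mul, ← mul_assoc, Ideal.Quotient.eq_zero_iff_mem]
  exact Ideal.subset_span (Set.mem_insert _ _)

lemma mk_X0_cube_add_three_mul_mk_X1_sq_eq_zero :
    Ideal.Quotient.mk (jacobianIdeal K) (X 0) ^ 3 +
      3 * Ideal.Quotient.mk (jacobianIdeal K) (X 1) ^ 2 = 0 := by
  rw [← map_ofNat (Ideal.Quotient.mk (jacobianIdeal K)) 3, ← map_pow, ← map_pow,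
    ← map_mul, ← map_add, Ideal.Quotient.eq_zero_iff_mem]
  exact Ideal.subset_span (Set.mem_insert_of_mem _ rfl)

theorem mul_mem_span_of_jacobian_relations {A : Type*} [CommRing A] [Algebra K A]
    (h3 : (3 : K) ≠ 0) {x y : A} (hx2y : x ^ 2 * y = 0) (hcube : x ^ 3 + 3 * y ^ 2 = 0) :
    ∀ v ∈ ({1, x, x ^ 2, x ^ 3, x ^ 4, y, x * y} : Set A),
      v * x ∈ Submodule.span K {1, x, x ^ 2, x ^ 3, x ^ 4, y, x * y} ∧
      v * y ∈ Submodule.span K {1, x, x ^ 2, x ^ 3, x ^ 4, y, x * y} := by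
  set S : Set A := {1, x, x ^ 2, x ^ 3, x ^ 4, y, x * y}
  have mem {u w : A} (hw : w ∈ S) (h : u = w) : u ∈ Submodule.span K S :=
    h ▸ Submodule.subset_span hw
  have mem_of_eq_zero {u : A} (h : u = 0) : u ∈ Submodule.span K S := h ▸ zero_mem _
  have mem_of_three_mul {u w : A} (hw : w ∈ S) (h : 3 * u = -w) : u ∈ Submodule.span K S := by
    rw [← Submodule.smul_mem_iff _ h3, Algebra.smul_def, map_ofNat, h]
    exact neg_mem (Submodule.subset_span hw)
  simp only [S, Set.forall_mem_insert, Set.mem_singleton_iff, forall_eq]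
  refine ⟨⟨mem (by simp [S]) (one_mul x), mem (by simp [S]) (one_mul y)⟩,
    ⟨mem (by simp [S]) (sq x).symm, mem (by simp [S]) rfl⟩,
    ⟨mem (by simp [S]) (pow_succ x 2).symm, mem_of_eq_zero hx2y⟩,
    ⟨mem (by simp [S]) (pow_succ x 3).symm, mem_of_eq_zero (by linear_combination x * hx2y)⟩,
    ⟨mem_of_eq_zero (by linear_combination x ^ 2 * hcube - 3 * y * hx2y),
      mem_of_eq_zero (by linear_combination x ^ 2 * hx2y)⟩,
    ⟨mem (by simp [S]) (mul_comm y x),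
      mem_of_three_mul (w := x ^ 3) (by simp [S]) (by linear_combination hcube)⟩,
    ⟨mem_of_eq_zero (by linear_combination hx2y),
      mem_of_three_mul (w := x ^ 4) (by simp [S]) (by linear_combination x * hcube)⟩⟩

theorem span_standardMonomials (h3 : (3 : K) ≠ 0) :
    Submodule.span K (Set.range (Ideal.Quotient.mk (jacobianIdeal K) ∘ standardMonomials K)) =
      ⊤ := by
  set x := Ideal.Quotient.mk (jacobianIdeal K) (X 0)
  set y := Ideal.Quotient.mk (jacobianIdeal K) (X 1)
  have hrange : Set.range (Ideal.Quotient.mk (jacobianIdeal K) ∘ standardMonomials K) =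
      {1, x, x ^ 2, x ^ 3, x ^ 4, y, x * y} := by
    ext v
    simp [standardMonomials, Fin.exists_fin_succ, x, y, eq_comm]
  have hmul := mul_mem_span_of_jacobian_relations h3 (mk_X0_sq_mul_mk_X1_eq_zero h3)
    mk_X0_cube_add_three_mul_mk_X1_sq_eq_zero
  rw [hrange]
  refine MvPolynomial.span_eq_top_of_mul_mk_X_mem (Submodule.subset_span (by simp))
    fun v hv i => ?_
  fin_cases i
  exacts [(hmul v hv).1, (hmul v hv).2]

end E7

/-- The Jacobi ring `ℂ[x₁,x₂]/(3x₁²x₂, x₁³+3x₂²)` of `w = x₁³x₂ + x₂³` is a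
7-dimensional `ℂ`-vector space with basis `{1, x₁, x₁², x₁³, x₁⁴, x₂, x₁x₂}`. -/
theorem jacobi_ring_E7_basis
    (I : Ideal (MvPolynomial (Fin 2) ℂ))
    (hI : I = Ideal.span {3 * X 0 ^ 2 * X 1, X 0 ^ 3 + 3 * X 1 ^ 2})
    (f : Fin 7 → (MvPolynomial (Fin 2) ℂ ⧸ I))
    (hf : f = fun i => Ideal.Quotient.mk I
      (![1, X 0, X 0 ^ 2, X 0 ^ 3, X 0 ^ 4, X 1, X 0 * X 1] i)) :
    LinearIndependent ℂ f ∧ Submodule.span ℂ (Set.range f) = ⊤ ∧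
      Module.finrank ℂ (MvPolynomial (Fin 2) ℂ ⧸ I) = 7 := by
  subst hI hf
  have hli := E7.linearIndependent_standardMonomials (K := ℂ) three_ne_zero
  have hspan := E7.span_standardMonomials (K := ℂ) three_ne_zero
  exact ⟨hli, hspan, (Module.finrank_eq_card_basis (Module.Basis.mk hli hspan.ge)).trans
    (Fintype.card_fin 7)⟩
end

section
/- Let ℓ ≥ 4 and n ≥ 1, and let Γ = { (t₀,…,t_{n+1}) ∈ (ℂ*)^{n+2} : t₁^{ℓ−1}t₂ = t₂² = t₃² = ⋯ = t_{n+1}² = t₀t₁⋯t_{n+1} } with character χ(γ) = t₂². Then ker χ is isomorphic as a group to μ_{2ℓ−2} × (μ₂)^{n−1}. -/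
/-!
On `ker χ` the defining equations of `Γ` read `t₂² = 1`, `t₂ = (t₁^e)⁻¹` with `e = ℓ - 1`,
`t_i² = 1` for `i ≥ 3`, and `t₀ = (t₁ t₂ ⋯ t_{n+1})⁻¹`. So `t₂` and `t₀` are determined by the
free coordinates `t₁, t₃, …, t_{n+1}`, subject only to `t₁^{2e} = t₂⁻² = 1` and `t_i² = 1`.
-/

open Finset

theorem Fin.prod_univ_add_three {β : Type*} [CommMonoid β] {m : ℕ} (f : Fin (m + 3) → β) :
    ∏ i, f i = f 0 * f 1 * f 2 * ∏ j : Fin m, f j.succ.succ.succ := by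
  simp [Fin.prod_univ_succ, mul_assoc]

section TypeD

variable (M : Type*) [CommMonoid M] (e m : ℕ)

def typeDCharacter : (Fin (m + 3) → Mˣ) →* Mˣ :=
  (powMonoidHom 2).comp (Pi.evalMonoidHom (fun _ : Fin (m + 3) => Mˣ) 2)

/-- The group `Γ` of type `D_ℓ` is `typeDGroup M (ℓ - 1) (n - 1)`, with coordinates
`t₀, …, t_{n+1}`. -/
def typeDGroup : Subgroup (Fin (m + 3) → Mˣ) :=
  (((powMonoidHom e).comp (Pi.evalMonoidHom (fun _ : Fin (m + 3) => Mˣ) 1) *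
        Pi.evalMonoidHom (fun _ : Fin (m + 3) => Mˣ) 2) / typeDCharacter M m).ker ⊓
    (⨅ (i : Fin (m + 3)) (_ : 3 ≤ (i : ℕ)),
      ((powMonoidHom 2).comp (Pi.evalMonoidHom (fun _ : Fin (m + 3) => Mˣ) i) /
        typeDCharacter M m).ker) ⊓
    ((∏ i : Fin (m + 3), Pi.evalMonoidHom (fun _ : Fin (m + 3) => Mˣ) i) /
      typeDCharacter M m).ker

def typeDKernel : Subgroup (Fin (m + 3) → Mˣ) :=
  typeDGroup M e m ⊓ (typeDCharacter M m).ker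

variable {M e m}

theorem mem_typeDKernel {t : Fin (m + 3) → Mˣ} :
    t ∈ typeDKernel M e m ↔ t 2 ^ 2 = 1 ∧ t 1 ^ e * t 2 = 1 ∧
      (∀ j : Fin m, t j.succ.succ.succ ^ 2 = 1) ∧ ∏ i, t i = 1 := by
  simp only [typeDKernel, typeDGroup, typeDCharacter, Subgroup.mem_inf, MonoidHom.mem_ker,
    Subgroup.mem_iInf, MonoidHom.div_apply, MonoidHom.mul_apply, MonoidHom.coe_comp,
    Function.comp_apply, Pi.evalMonoidHom_apply, powMonoidHom_apply,
    MonoidHom.finsetProd_apply, div_eq_one]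
  rw [and_comm]
  refine and_congr_right fun hχ => ?_
  simp [hχ, Fin.forall_fin_succ, and_assoc]

theorem pow_two_mul_eq_one_of_mem_typeDKernel {t : Fin (m + 3) → Mˣ}
    (ht : t ∈ typeDKernel M e m) :
    t 1 ^ (2 * e) = 1 := by
  obtain ⟨h₂, h₁, -⟩ := mem_typeDKernel.mp ht
  rw [mul_comm, pow_mul, eq_inv_of_mul_eq_one_left h₁, inv_pow, h₂, inv_one]

variable (e) in
def typeDLift (a : Mˣ) (f : Fin m → Mˣ) : Fin (m + 3) → Mˣ :=
  Fin.cons (a * (a ^ e)⁻¹ * ∏ j, f j)⁻¹ (Fin.cons a (Fin.cons (a ^ e)⁻¹ f))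

section
variable (e) (a : Mˣ) (f : Fin m → Mˣ)

@[simp] theorem typeDLift_one : typeDLift e a f 1 = a := by simp [typeDLift]

@[simp] theorem typeDLift_two : typeDLift e a f 2 = (a ^ e)⁻¹ := by
  rw [typeDLift, ← Fin.succ_one_eq_two, Fin.cons_succ, Fin.cons_one, Fin.cons_zero]

@[simp] theorem typeDLift_succ_succ_succ (j : Fin m) :
    typeDLift e a f j.succ.succ.succ = f j := by
  simp [typeDLift]

theorem prod_typeDLift : ∏ i, typeDLift e a f i = 1 := by
  rw [Fin.prod_univ_add_three, typeDLift_one, typeDLift_two]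
  simp only [typeDLift_succ_succ_succ]
  rw [typeDLift, Fin.cons_zero, mul_assoc, mul_assoc, ← mul_assoc a, inv_mul_cancel]

theorem typeDLift_mem_typeDKernel (ha : a ^ (2 * e) = 1) (hf : ∀ j, f j ^ 2 = 1) :
    typeDLift e a f ∈ typeDKernel M e m := by
  refine mem_typeDKernel.mpr ⟨?_, ?_, by simpa using hf, prod_typeDLift e a f⟩
  · rw [typeDLift_two, inv_pow, ← pow_mul, mul_comm, ha, inv_one]
  · rw [typeDLift_one, typeDLift_two, mul_inv_cancel]

end

theorem eq_typeDLift_of_mem_typeDKernel {t : Fin (m + 3) → Mˣ} (ht : t ∈ typeDKernel M e m) :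
    typeDLift e (t 1) (fun j => t j.succ.succ.succ) = t := by
  obtain ⟨-, h₁, -, h₄⟩ := mem_typeDKernel.mp ht
  have h₂ : (t 1 ^ e)⁻¹ = t 2 := (eq_inv_of_mul_eq_one_right h₁).symm
  funext i
  refine Fin.cases ?_ (Fin.cases ?_ (Fin.cases ?_ fun j => ?_)) i
  · rw [Fin.prod_univ_add_three, mul_assoc, mul_assoc, ← mul_assoc (t 1)] at h₄
    rw [typeDLift, Fin.cons_zero, h₂, ← eq_inv_of_mul_eq_one_left h₄]
  · simp
  · simp [h₂]
  · simp

variable (M e m)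

noncomputable def typeDKernelEquiv :
    typeDKernel M e m ≃* rootsOfUnity (2 * e) M × (Fin m → rootsOfUnity 2 M) where
  toFun t := (⟨t.1 1, pow_two_mul_eq_one_of_mem_typeDKernel t.2⟩,
    fun j => ⟨t.1 j.succ.succ.succ, (mem_typeDKernel.mp t.2).2.2.1 j⟩)
  invFun p := ⟨typeDLift e p.1 (fun j => p.2 j), typeDLift_mem_typeDKernel e _ _
    ((mem_rootsOfUnity _ _).mp p.1.2) fun j => (mem_rootsOfUnity _ _).mp (p.2 j).2⟩
  left_inv t := Subtype.ext (eq_typeDLift_of_mem_typeDKernel t.2)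
  right_inv p := by ext <;> simp
  map_mul' _ _ := rfl

end TypeD

theorem ker_chi_type_D_general (ℓ n : ℕ) (hn : 1 ≤ n)
    (χ : (Fin (n + 2) → ℂˣ) →* ℂˣ)
    (hχ : χ = (powMonoidHom 2).comp (Pi.evalMonoidHom (fun _ => ℂˣ) 2))
    (K : Subgroup (Fin (n + 2) → ℂˣ))
    (hK : K = ((((powMonoidHom (ℓ - 1)).comp (Pi.evalMonoidHom (fun _ => ℂˣ) 1) *
          Pi.evalMonoidHom (fun _ => ℂˣ) 2) / χ)).ker ⊓
      (⨅ (i : Fin (n + 2)) (_ : 3 ≤ (i : ℕ)),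
        (((powMonoidHom 2).comp (Pi.evalMonoidHom (fun _ => ℂˣ) i) / χ)).ker) ⊓
      ((∏ i : Fin (n + 2), Pi.evalMonoidHom (fun _ => ℂˣ) i) / χ).ker ⊓
      χ.ker) :
    Nonempty (K ≃* (rootsOfUnity (2 * ℓ - 2) ℂ × (Fin (n - 1) → rootsOfUnity 2 ℂ))) := by
  obtain ⟨m, rfl⟩ : ∃ m, n = m + 1 := ⟨n - 1, by omega⟩
  subst hχ hK
  rw [Nat.add_sub_cancel, ← Nat.mul_sub_one]
  exact ⟨typeDKernelEquiv ℂ (ℓ - 1) m⟩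

/-- For `Γ = { t ∈ (ℂ*)^{n+2} : t₁^{ℓ−1}t₂ = t₂² = t₃² = ⋯ = t_{n+1}² = t₀t₁⋯t_{n+1} }`
and the character `χ : γ ↦ t₂²`, the kernel of `χ` (inside `Γ`) is isomorphic to
`μ_{2ℓ−2} × (μ₂)^{n−1}`. -/
theorem ker_chi_type_D (ℓ n : ℕ) (hℓ : 4 ≤ ℓ) (hn : 1 ≤ n)
    (χ : (Fin (n + 2) → ℂˣ) →* ℂˣ)
    (hχ : χ = (powMonoidHom 2).comp (Pi.evalMonoidHom (fun _ => ℂˣ) 2))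
    (K : Subgroup (Fin (n + 2) → ℂˣ))
    (hK : K = ((((powMonoidHom (ℓ - 1)).comp (Pi.evalMonoidHom (fun _ => ℂˣ) 1) *
          Pi.evalMonoidHom (fun _ => ℂˣ) 2) / χ)).ker ⊓
      (⨅ (i : Fin (n + 2)) (_ : 3 ≤ (i : ℕ)),
        (((powMonoidHom 2).comp (Pi.evalMonoidHom (fun _ => ℂˣ) i) / χ)).ker) ⊓
      ((∏ i : Fin (n + 2), Pi.evalMonoidHom (fun _ => ℂˣ) i) / χ).ker ⊓
      χ.ker) :
    Nonempty (K ≃* (rootsOfUnity (2 * ℓ - 2) ℂ × (Fin (n - 1) → rootsOfUnity 2 ℂ))) :=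
  ker_chi_type_D_general ℓ n hn χ hχ K hK
end

section
/- Let L be the abelian group generated by symbols χ, χ₁, …, χ_{n+1} subject to the relations χ = (ℓ+1)χ₁ = 2χ₂ = ⋯ = 2χ_{n+1}, and set χ₀ := χ − (χ₁ + ⋯ + χ_{n+1}). Then for nonnegative integers k₀, k₁, the element k₀χ₀ + k₁χ₁ is an integer multiple of χ in L if and only if k₀ is even and (ℓ+1) divides k₀ − k₁. -/
/-!
Write every relation as `χ = aᵢ χᵢ`, including the trivial one `χ = 1 • χ`. A combination
`∑ cᵢ (χ - aᵢ χᵢ)` has coefficient vector `aⱼ (δ_{jχ} ∑ c - cⱼ)`, so the relation subgroup is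
`{a * q | ∑ q = 0}`. The element `k₀χ₀ + k₁χ₁ - uχ` has coefficients `k₀ - u`, `k₁ - k₀` and `-k₀`,
so it is a relation iff `ℓ + 1 ∣ k₁ - k₀` and `2 ∣ k₀`: the constraint `∑ q = 0` is absorbed by `u`.
-/

open Finset

section FermatRelations

variable {ι : Type*} [Fintype ι] [DecidableEq ι] {i₀ : ι} {a : ι → ℤ}

theorem sum_zsmul_single_sub_zsmul_single (h₀ : a i₀ = 1) (c : ι → ℤ) :
    ∑ i, c i • (Pi.single i₀ 1 - a i • Pi.single i 1 : ι → ℤ) =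
      a * (Pi.single i₀ (∑ i, c i) - c) := by
  ext j
  by_cases hj : j = i₀
  · subst hj
    simp [Finset.sum_apply, Pi.single_apply, h₀, mul_sub, sum_sub_distrib]
  · simp [Finset.sum_apply, Pi.single_apply, hj, mul_comm]

theorem mem_closure_range_single_sub_zsmul_single_iff (h₀ : a i₀ = 1) (x : ι → ℤ) :
    x ∈ AddSubgroup.closure (Set.range fun i => (Pi.single i₀ 1 - a i • Pi.single i 1 : ι → ℤ)) ↔
      ∃ q : ι → ℤ, ∑ i, q i = 0 ∧ x = a * q := by
  simp only [AddSubgroup.mem_closure_range_iff_of_fintype,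
    sum_zsmul_single_sub_zsmul_single h₀]
  constructor
  · rintro ⟨c, rfl⟩
    exact ⟨_, by simp [sum_sub_distrib], rfl⟩
  · rintro ⟨q, hq, rfl⟩
    exact ⟨-q, by simp [hq]⟩

end FermatRelations

def typeAWeights (ℓ n : ℕ) : Fin (n + 2) → ℤ :=
  Fin.cons 1 (Fin.cons (ℓ + 1 : ℤ) fun _ => 2)

theorem typeAWeights_of_two_le {ℓ n : ℕ} {i : Fin (n + 2)} (hi : 2 ≤ (i : ℕ)) :
    typeAWeights ℓ n i = 2 := by
  obtain ⟨k, rfl⟩ : ∃ k : Fin n, i = k.succ.succ := ⟨⟨i - 2, by omega⟩, by ext; simp; omega⟩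
  rfl

theorem closure_typeA_relations (ℓ n : ℕ) :
    AddSubgroup.closure (G := Fin (n + 2) → ℤ)
      ({Pi.single 0 1 - (ℓ + 1 : ℤ) • Pi.single 1 1} ∪
       {x | ∃ i : Fin (n + 2), 2 ≤ (i : ℕ) ∧ x = Pi.single 0 1 - (2 : ℤ) • Pi.single i 1}) =
      AddSubgroup.closure
        (Set.range fun i => Pi.single 0 1 - typeAWeights ℓ n i • Pi.single i 1) := by
  refine le_antisymm (AddSubgroup.closure_mono ?_) (AddSubgroup.closure_le _ |>.mpr ?_)
  · rintro x (rfl | ⟨i, hi, rfl⟩)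
    · exact ⟨1, rfl⟩
    · exact ⟨i, by simp only [typeAWeights_of_two_le hi]⟩
  · rintro _ ⟨i, rfl⟩
    induction i using Fin.cases with
    | zero => simp [typeAWeights]
    | succ j =>
      induction j using Fin.cases with
      | zero => exact AddSubgroup.subset_closure (Or.inl rfl)
      | succ k => exact AddSubgroup.subset_closure (Or.inr ⟨k.succ.succ, by simp, rfl⟩)

theorem degree_criterion_type_A_general (ℓ n : ℕ) (hn : 2 ≤ n)
    (R : AddSubgroup (Fin (n + 2) → ℤ))
    (hR : R = AddSubgroup.closure
      ({Pi.single 0 1 - (ℓ + 1 : ℤ) • Pi.single 1 1} ∪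
       {x | ∃ i : Fin (n + 2), 2 ≤ (i : ℕ) ∧
          x = Pi.single 0 1 - (2 : ℤ) • Pi.single i 1}))
    (χ₀ : Fin (n + 2) → ℤ)
    (hχ₀ : χ₀ = Pi.single 0 1 - ∑ i ∈ Finset.univ \ {0}, Pi.single i 1) :
    ∀ k₀ k₁ : ℕ,
      (∃ u : ℤ, (QuotientAddGroup.mk ((k₀ : ℤ) • χ₀ + (k₁ : ℤ) • Pi.single 1 1) :
          (Fin (n + 2) → ℤ) ⧸ R) =
        u • (QuotientAddGroup.mk (Pi.single 0 1) : (Fin (n + 2) → ℤ) ⧸ R)) ↔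
      (2 ∣ k₀ ∧ (ℓ + 1 : ℤ) ∣ ((k₀ : ℤ) - (k₁ : ℤ))) := by
  intro k₀ k₁
  simp_rw [← QuotientAddGroup.mk_zsmul, QuotientAddGroup.eq_iff_sub_mem, hR,
    closure_typeA_relations,
    mem_closure_range_single_sub_zsmul_single_iff (rfl : typeAWeights ℓ n 0 = 1)]
  constructor
  · rintro ⟨u, q, -, hq⟩
    have h₁ := congrFun hq 1
    have h₂ := congrFun hq ⟨2, by omega⟩
    simp [hχ₀, Finset.sum_apply, Pi.single_apply, typeAWeights] at h₁
    simp [hχ₀, Finset.sum_apply, Pi.single_apply, typeAWeights_of_two_le] at h₂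
    have hk₀ : (2 : ℤ) ∣ k₀ := ⟨-q ⟨2, by omega⟩, by linarith⟩
    exact ⟨by exact_mod_cast hk₀, -q 1, by linarith⟩
  · rintro ⟨⟨m, rfl⟩, t, ht⟩
    push_cast at ht
    refine ⟨2 * m - t - n * m, Fin.cons (t + n * m) (Fin.cons (-t) fun _ => -m), ?_, ?_⟩
    · simp only [Fin.sum_cons, sum_const, card_univ, Fintype.card_fin, nsmul_eq_mul]
      ring
    · ext j
      refine Fin.cases ?_ (Fin.cases ?_ fun k => ?_) j <;>
        simp [hχ₀, Finset.sum_apply, Pi.single_apply, typeAWeights, Fin.succ_succ_ne_one] <;>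
        linarith

/-- In the abelian group `L` generated by `χ, χ₁, …, χ_{n+1}` with relations
`χ = (ℓ+1)χ₁ = 2χ₂ = ⋯ = 2χ_{n+1}`, with `χ₀ := χ − (χ₁ + ⋯ + χ_{n+1})`, the element
`k₀χ₀ + k₁χ₁` is an integer multiple of `χ` iff `k₀` is even and `ℓ+1 ∣ k₀ − k₁`.
Here `L` is modelled as the quotient of the free abelian group on `n+2` generators
(`χ` at index `0`, `χᵢ` at index `i`) by the relations. -/
theorem degree_criterion_type_A (ℓ n : ℕ) (hℓ : 1 ≤ ℓ) (hn : 2 ≤ n)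
    (R : AddSubgroup (Fin (n + 2) → ℤ))
    (hR : R = AddSubgroup.closure
      ({Pi.single 0 1 - (ℓ + 1 : ℤ) • Pi.single 1 1} ∪
       {x | ∃ i : Fin (n + 2), 2 ≤ (i : ℕ) ∧
          x = Pi.single 0 1 - (2 : ℤ) • Pi.single i 1}))
    (χ₀ : Fin (n + 2) → ℤ)
    (hχ₀ : χ₀ = Pi.single 0 1 - ∑ i ∈ Finset.univ \ {0}, Pi.single i 1) :
    ∀ k₀ k₁ : ℕ,
      (∃ u : ℤ, (QuotientAddGroup.mk ((k₀ : ℤ) • χ₀ + (k₁ : ℤ) • Pi.single 1 1) :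
          (Fin (n + 2) → ℤ) ⧸ R) =
        u • (QuotientAddGroup.mk (Pi.single 0 1) : (Fin (n + 2) → ℤ) ⧸ R)) ↔
      (2 ∣ k₀ ∧ (ℓ + 1 : ℤ) ∣ ((k₀ : ℤ) - (k₁ : ℤ))) :=
  degree_criterion_type_A_general ℓ n hn R hR χ₀ hχ₀
end

section
/- Let L be the abelian group generated by χ, χ₁, …, χ_{n+1} with relations χ = 3χ₁ + χ₂ = 3χ₂ = 2χ₃ = ⋯ = 2χ_{n+1} (n ≥ 2), and set χ₀ := χ − (χ₁ + ⋯ + χ_{n+1}). Then for nonnegative integers k₀, k₁, k₂, the element k₀χ₀ + k₁χ₁ + k₂χ₂ is an integer multiple of χ in L if and only if 9 divides 2k₀ + k₁ − 3k₂ and k₀ is even. -/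
/-!
Modulo `χ`, the relations say `χ₂ = -3χ₁`, `9χ₁ = 0` and `2χᵢ = 0` for `i ≥ 3`, and `χ₀` becomes
`2χ₁ - (χ₃ + ⋯ + χ_{n+1})`. Hence `k₀χ₀ + k₁χ₁ + k₂χ₂ ≡ (2k₀ + k₁ - 3k₂)χ₁ - k₀(χ₃ + ⋯ + χ_{n+1})`,
which vanishes exactly under the two divisibility conditions. Necessity is detected by the
homomorphisms `v ↦ 3v₂ - v₁ mod 9` and `v ↦ vᵢ mod 2` (`i ≥ 3`) on `ℤ^{n+2}` (where `χ` is the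
basis vector `e₀`), which kill the relations and `χ`.
-/

open QuotientAddGroup Finset

theorem map_eq_zero_of_mk_eq_zsmul {G M : Type*} [AddCommGroup G] [AddCommGroup M]
    {R : AddSubgroup G} (f : G →+ M) (hR : R ≤ f.ker) {e v : G} (he : f e = 0) {u : ℤ}
    (h : (mk v : G ⧸ R) = u • mk e) : f v = 0 := by
  simpa [he] using congrArg (QuotientAddGroup.lift R f hR) h

theorem exists_zsmul_of_E7_relations {Q ι : Type*} [AddCommGroup Q] (s : Finset ι)
    (x₀ x₁ x₂ : Q) (y : ι → Q) (h₁ : x₀ = (3 : ℤ) • x₁ + x₂) (h₂ : x₀ = (3 : ℤ) • x₂)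
    (hy : ∀ i ∈ s, x₀ = (2 : ℤ) • y i) {k₀ k₁ k₂ : ℤ} (h9 : 9 ∣ 2 * k₀ + k₁ - 3 * k₂)
    (h2 : 2 ∣ k₀) :
    ∃ u : ℤ, k₀ • (x₀ - (x₁ + x₂ + ∑ i ∈ s, y i)) + k₁ • x₁ + k₂ • x₂ = u • x₀ := by
  obtain ⟨c, rfl⟩ := h2
  obtain ⟨a, rfl⟩ : ∃ a, k₁ = 2 * c - 3 * a := ⟨(2 * c - k₁) / 3, by omega⟩
  obtain ⟨b, rfl⟩ : ∃ b, k₂ = 2 * c - a - 3 * b := ⟨(2 * c - k₂ - a) / 3, by omega⟩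
  have hsum : (2 : ℤ) • ∑ i ∈ s, y i = (#s : ℤ) • x₀ := by
    rw [smul_sum, sum_congr rfl fun i hi => (hy i hi).symm, sum_const, natCast_zsmul]
  refine ⟨2 * c - c * #s - a - b, ?_⟩
  linear_combination (norm := module) a • h₁ + b • h₂ - c • hsum

theorem single_sub_sum_single_sdiff_apply {ι : Type*} [Fintype ι] [DecidableEq ι] {i₀ j : ι}
    (hj : j ≠ i₀) : (Pi.single i₀ 1 - ∑ i ∈ univ \ {i₀}, Pi.single i 1 : ι → ℤ) j = -1 := by
  simp [Finset.sum_apply, Pi.single_apply, hj]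

variable {n : ℕ}

theorem sum_sdiff_zero_eq {M : Type*} [AddCommMonoid M] (hn : 1 ≤ n) (f : Fin (n + 2) → M) :
    ∑ i ∈ univ \ {0}, f i = f 1 + f 2 + ∑ i ∈ univ.filter (3 ≤ ·.val), f i := by
  have h2 : 2 % (n + 2) = 2 := Nat.mod_eq_of_lt (by omega)
  have : univ \ {0} = insert 1 (insert 2 (univ.filter fun i : Fin (n + 2) => 3 ≤ i.val)) := by
    ext i
    simp only [mem_sdiff, mem_univ, mem_singleton, mem_insert, mem_filter, true_and, Fin.ext_iff,
      Fin.coe_ofNat_eq_mod, Nat.zero_mod, Nat.one_mod, h2]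
    omega
  rw [this, sum_insert, sum_insert, add_assoc] <;>
    simp only [mem_insert, mem_filter, mem_univ, true_and, Fin.ext_iff,
      Fin.coe_ofNat_eq_mod, Nat.one_mod, h2] <;> omega

def e7Relations (n : ℕ) : AddSubgroup (Fin (n + 2) → ℤ) :=
  AddSubgroup.closure
    ({Pi.single 0 1 - ((3 : ℤ) • Pi.single 1 1 + Pi.single 2 1),
      Pi.single 0 1 - (3 : ℤ) • Pi.single 2 1} ∪
     {x | ∃ i : Fin (n + 2), 3 ≤ (i : ℕ) ∧ x = Pi.single 0 1 - (2 : ℤ) • Pi.single i 1})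

def chiZero (n : ℕ) : Fin (n + 2) → ℤ := Pi.single 0 1 - ∑ i ∈ univ \ {0}, Pi.single i 1

def mod9Invariant (n : ℕ) : (Fin (n + 2) → ℤ) →+ ZMod 9 where
  toFun v := ((3 * v 2 - v 1 : ℤ) : ZMod 9)
  map_zero' := by simp
  map_add' v w := by simp only [Pi.add_apply]; push_cast; ring

def mod2Invariant (i : Fin (n + 2)) : (Fin (n + 2) → ℤ) →+ ZMod 2 :=
  (Int.castAddHom (ZMod 2)).comp (Pi.evalAddMonoidHom (fun _ => ℤ) i)

theorem e7Relations_le_ker_mod9Invariant (hn : 1 ≤ n) :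
    e7Relations n ≤ (mod9Invariant n).ker := by
  have h2 : 2 % (n + 2) = 2 := Nat.mod_eq_of_lt (by omega)
  rw [e7Relations, AddSubgroup.closure_le]
  rintro x ((rfl | rfl) | ⟨i, hi, rfl⟩)
  · simp [mod9Invariant, Fin.ext_iff, h2]
  · simp [mod9Invariant, Fin.ext_iff, h2]
    decide
  · simp [mod9Invariant, Fin.ext_iff, h2, show (i : ℕ) ≠ 1 by omega,
      show (i : ℕ) ≠ 2 by omega]

theorem e7Relations_le_ker_mod2Invariant {i : Fin (n + 2)} (hi : 3 ≤ (i : ℕ)) :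
    e7Relations n ≤ (mod2Invariant i).ker := by
  have h2 : 2 % (n + 2) = 2 := Nat.mod_eq_of_lt (by omega)
  rw [e7Relations, AddSubgroup.closure_le]
  rintro x ((rfl | rfl) | ⟨j, hj, rfl⟩)
  all_goals simp [mod2Invariant, Pi.single_apply, Fin.ext_iff, h2,
    show (i : ℕ) ≠ 0 by omega, show (i : ℕ) ≠ 1 by omega, show (i : ℕ) ≠ 2 by omega,
    show (2 : ZMod 2) = 0 from rfl]

theorem nine_dvd_and_two_dvd_of_mk_eq_zsmul (hn : 2 ≤ n) {k₀ k₁ k₂ u : ℤ}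
    (h : (QuotientAddGroup.mk (k₀ • chiZero n + k₁ • Pi.single 1 1 + k₂ • Pi.single 2 1) :
      (Fin (n + 2) → ℤ) ⧸ e7Relations n) = u • QuotientAddGroup.mk (Pi.single 0 1)) :
    9 ∣ 2 * k₀ + k₁ - 3 * k₂ ∧ 2 ∣ k₀ := by
  have h2 : 2 % (n + 2) = 2 := Nat.mod_eq_of_lt (by omega)
  have hχ : ∀ j : Fin (n + 2), j ≠ 0 → chiZero n j = -1 := fun j =>
    single_sub_sum_single_sdiff_apply
  have h9 : ((3 * (k₂ - k₀) - (k₁ - k₀) : ℤ) : ZMod 9) = 0 := by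
    simpa [mod9Invariant, Fin.ext_iff, h2, hχ, sub_eq_neg_add] using
      map_eq_zero_of_mk_eq_zsmul _ (e7Relations_le_ker_mod9Invariant (by omega))
        (by simp [mod9Invariant, Fin.ext_iff, h2]) h
  have h3 : (k₀ : ZMod 2) = 0 := by
    simpa [mod2Invariant, Fin.ext_iff, h2, hχ] using
      map_eq_zero_of_mk_eq_zsmul (mod2Invariant ⟨3, by omega⟩)
        (e7Relations_le_ker_mod2Invariant le_rfl) (by simp [mod2Invariant, Fin.ext_iff]) h
  refine ⟨(ZMod.intCast_zmod_eq_zero_iff_dvd _ 9).mp ?_,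
    (ZMod.intCast_zmod_eq_zero_iff_dvd _ 2).mp h3⟩
  rw [← neg_eq_zero, ← h9]
  push_cast
  ring

theorem exists_mk_eq_zsmul (hn : 1 ≤ n) {k₀ k₁ k₂ : ℤ} (h9 : 9 ∣ 2 * k₀ + k₁ - 3 * k₂)
    (h2 : 2 ∣ k₀) :
    ∃ u : ℤ, (QuotientAddGroup.mk (k₀ • chiZero n + k₁ • Pi.single 1 1 + k₂ • Pi.single 2 1) :
      (Fin (n + 2) → ℤ) ⧸ e7Relations n) = u • QuotientAddGroup.mk (Pi.single 0 1) := by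
  set x : Fin (n + 2) → (Fin (n + 2) → ℤ) ⧸ e7Relations n := fun i => mk (Pi.single i 1)
  have hrel : ∀ r ∈ _, (mk r : (Fin (n + 2) → ℤ) ⧸ e7Relations n) = 0 := fun r hr =>
    (eq_zero_iff r).mpr (AddSubgroup.subset_closure hr)
  have h₁ : x 0 = (3 : ℤ) • x 1 + x 2 := by
    simpa only [x, mk_sub, mk_add, mk_zsmul, sub_eq_zero] using hrel _ (Or.inl (Or.inl rfl))
  have h₂ : x 0 = (3 : ℤ) • x 2 := by
    simpa only [x, mk_sub, mk_add, mk_zsmul, sub_eq_zero] using hrel _ (Or.inl (Or.inr rfl))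
  have hy : ∀ i ∈ univ.filter (3 ≤ ·.val), x 0 = (2 : ℤ) • x i := fun i hi => by
    simpa only [x, mk_sub, mk_add, mk_zsmul, sub_eq_zero] using
      hrel _ (Or.inr ⟨i, (mem_filter.mp hi).2, rfl⟩)
  have hχ : (mk (chiZero n) : (Fin (n + 2) → ℤ) ⧸ e7Relations n) =
      x 0 - (x 1 + x 2 + ∑ i ∈ univ.filter (3 ≤ ·.val), x i) := by
    rw [chiZero, mk_sub, mk_sum, sum_sdiff_zero_eq hn]
  simp only [mk_add, mk_zsmul, hχ]
  exact exists_zsmul_of_E7_relations _ _ _ _ x h₁ h₂ hy h9 h2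

/-- In the abelian group `L` generated by `χ, χ₁, …, χ_{n+1}` with relations
`χ = 3χ₁ + χ₂ = 3χ₂ = 2χ₃ = ⋯ = 2χ_{n+1}` (type `E₇`, `n ≥ 2`), with
`χ₀ := χ − (χ₁ + ⋯ + χ_{n+1})`, the element `k₀χ₀ + k₁χ₁ + k₂χ₂` is an integer
multiple of `χ` iff `9 ∣ 2k₀ + k₁ − 3k₂` and `k₀` is even. -/
theorem degree_criterion_type_E7 (n : ℕ) (hn : 2 ≤ n)
    (R : AddSubgroup (Fin (n + 2) → ℤ))
    (hR : R = AddSubgroup.closure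
      ({Pi.single 0 1 - ((3 : ℤ) • Pi.single 1 1 + Pi.single 2 1),
        Pi.single 0 1 - (3 : ℤ) • Pi.single 2 1} ∪
       {x | ∃ i : Fin (n + 2), 3 ≤ (i : ℕ) ∧
          x = Pi.single 0 1 - (2 : ℤ) • Pi.single i 1}))
    (χ₀ : Fin (n + 2) → ℤ)
    (hχ₀ : χ₀ = Pi.single 0 1 - ∑ i ∈ Finset.univ \ {0}, Pi.single i 1) :
    ∀ k₀ k₁ k₂ : ℕ,
      (∃ u : ℤ, (QuotientAddGroup.mk
          ((k₀ : ℤ) • χ₀ + (k₁ : ℤ) • Pi.single 1 1 + (k₂ : ℤ) • Pi.single 2 1) :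
          (Fin (n + 2) → ℤ) ⧸ R) =
        u • (QuotientAddGroup.mk (Pi.single 0 1) : (Fin (n + 2) → ℤ) ⧸ R)) ↔
      ((9 : ℤ) ∣ (2 * (k₀ : ℤ) + (k₁ : ℤ) - 3 * (k₂ : ℤ)) ∧ 2 ∣ k₀) := by
  subst hR hχ₀
  intro k₀ k₁ k₂
  rw [← Int.natCast_dvd_natCast, Nat.cast_ofNat]
  constructor
  · rintro ⟨u, hu⟩
    exact nine_dvd_and_two_dvd_of_mk_eq_zsmul hn hu
  · rintro ⟨h9, h2⟩
    exact exists_mk_eq_zsmul (by omega) h9 h2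
end

section
/- Let ℓ ≥ 4 and n ≥ 1, and let L be the abelian group generated by χ, χ₁, …, χ_{n+1} with relations χ = (ℓ−1)χ₁ + χ₂ = 2χ₂ = ⋯ = 2χ_{n+1}, and set χ₀ := χ − (χ₁ + ⋯ + χ_{n+1}). If n is even, then (2ℓ−2)χ₀ = ((2ℓ−3) − (ℓ−1)n)·χ in L, and 2ℓ−2 is the smallest positive integer k such that kχ₀ is an integer multiple of χ. -/
set_option maxHeartbeats 1000000

def psiD (n ℓ : ℕ) : (Fin (n + 2) → ℤ) →+ ℤ :=
  AddMonoidHom.mk'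
    (fun x => (2 * (ℓ : ℤ) - 2) * x 0 + x 1 + ((ℓ : ℤ) - 1) * ((∑ i, x i) - x 0 - x 1))
    (by intro a b; simp [Finset.sum_add_distrib]; ring)

def tauD (n : ℕ) : (Fin (n + 2) → ℤ) →+ ZMod 2 :=
  AddMonoidHom.mk' (fun x => ((x 3 : ℤ) : ZMod 2)) (by intro a b; push_cast; simp)

theorem psiD_single (n ℓ : ℕ) (j : Fin (n + 2)) (c : ℤ) :
    psiD n ℓ (Pi.single j c) =
      (if j = 0 then 2 * (ℓ : ℤ) - 2 else if j = 1 then 1 else (ℓ : ℤ) - 1) * c := by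
  have hs : (∑ i, Pi.single j c i) = c := Fintype.sum_pi_single' j c
  simp only [psiD, AddMonoidHom.mk'_apply, hs]
  rcases eq_or_ne j 0 with rfl | h0
  · simp [Pi.single_eq_same, Pi.single_eq_of_ne (show (1 : Fin (n+2)) ≠ 0 by simp)]
  · rcases eq_or_ne j 1 with rfl | h1
    · simp [Pi.single_eq_same, Pi.single_eq_of_ne (show (0 : Fin (n+2)) ≠ 1 by simp), h0]
    · simp [Pi.single_eq_of_ne (Ne.symm h0), Pi.single_eq_of_ne (Ne.symm h1), h0, h1]

/-- In the abelian group generated by `χ, χ₁, …, χ_{n+1}` with relations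
`χ = (ℓ−1)χ₁ + χ₂ = 2χ₂ = ⋯ = 2χ_{n+1}` (type `D_ℓ`), with
`χ₀ := χ − (χ₁ + ⋯ + χ_{n+1})`: if `n` is even then
`(2ℓ−2)χ₀ = ((2ℓ−3) − (ℓ−1)n)·χ`, and `2ℓ−2` is the smallest positive integer `k`
such that `kχ₀` is an integer multiple of `χ`. -/
theorem smallest_multiple_type_D (ℓ n : ℕ) (hℓ : 4 ≤ ℓ) (hn : 1 ≤ n)
    (R : AddSubgroup (Fin (n + 2) → ℤ))
    (hR : R = AddSubgroup.closure
      ({Pi.single 0 1 - ((ℓ - 1 : ℤ) • Pi.single 1 1 + Pi.single 2 1)} ∪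
       {x | ∃ i : Fin (n + 2), 2 ≤ (i : ℕ) ∧
          x = Pi.single 0 1 - (2 : ℤ) • Pi.single i 1}))
    (χ₀ : Fin (n + 2) → ℤ)
    (hχ₀ : χ₀ = Pi.single 0 1 - ∑ i ∈ Finset.univ \ {0}, Pi.single i 1)
    (hneven : Even n) :
    (QuotientAddGroup.mk ((2 * ℓ - 2 : ℤ) • χ₀) : (Fin (n + 2) → ℤ) ⧸ R) =
      ((2 * ℓ - 3 : ℤ) - (ℓ - 1 : ℤ) * n) •
        (QuotientAddGroup.mk (Pi.single 0 1) : (Fin (n + 2) → ℤ) ⧸ R) ∧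
    IsLeast {k : ℕ | 0 < k ∧ ∃ u : ℤ,
        (QuotientAddGroup.mk ((k : ℤ) • χ₀) : (Fin (n + 2) → ℤ) ⧸ R) =
          u • (QuotientAddGroup.mk (Pi.single 0 1) : (Fin (n + 2) → ℤ) ⧸ R)}
      (2 * ℓ - 2) := by
  obtain ⟨m', hm'⟩ := hneven
  have hn2 : 2 ≤ n := by omega
  -- Fin value facts
  have hv2 : ((2 : Fin (n+2)) : ℕ) = 2 := by
    rw [Fin.coe_ofNat_eq_mod]; exact Nat.mod_eq_of_lt (by omega)
  have hv3 : ((3 : Fin (n+2)) : ℕ) = 3 := by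
    rw [Fin.coe_ofNat_eq_mod]; exact Nat.mod_eq_of_lt (by omega)
  have h10 : (1 : Fin (n+2)) ≠ 0 := by simp
  have h20 : (2 : Fin (n+2)) ≠ 0 := Fin.ne_of_val_ne (by rw [hv2]; simp)
  have h21 : (2 : Fin (n+2)) ≠ 1 := Fin.ne_of_val_ne (by rw [hv2, Fin.val_one]; omega)
  have h30 : (3 : Fin (n+2)) ≠ 0 := Fin.ne_of_val_ne (by rw [hv3]; simp)
  have h31 : (3 : Fin (n+2)) ≠ 1 := Fin.ne_of_val_ne (by rw [hv3, Fin.val_one]; omega)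
  have h32 : (3 : Fin (n+2)) ≠ 2 := Fin.ne_of_val_ne (by rw [hv3, hv2]; omega)
  set A : Fin (n+2) → ℤ := Pi.single 0 1 with hA
  set g₀ : Fin (n+2) → ℤ := Pi.single 0 1 - ((ℓ - 1 : ℤ) • Pi.single 1 1 + Pi.single 2 1)
    with hg₀
  set S₁ : Fin (n+2) → ℤ := ∑ i ∈ Finset.univ \ {0}, Pi.single i 1 with hS₁
  -- ψ vanishes on R
  have hψker : ∀ x ∈ R, psiD n ℓ x = 0 := by
    rw [hR]
    have hle : AddSubgroup.closure
        ({g₀} ∪ {x | ∃ i : Fin (n + 2), 2 ≤ (i : ℕ) ∧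
          x = Pi.single 0 1 - (2 : ℤ) • Pi.single i 1}) ≤ (psiD n ℓ).ker := by
      rw [AddSubgroup.closure_le]
      rintro x (hx | ⟨i, hi2, rfl⟩)
      · rw [Set.mem_singleton_iff] at hx
        subst hx
        simp only [AddMonoidHom.mem_ker, SetLike.mem_coe, hg₀, map_sub, map_add, map_zsmul,
          psiD_single, smul_eq_mul]
        simp [h10, h20, h21]
        ring
      · have hi0 : i ≠ 0 := Fin.ne_of_val_ne (by rw [Fin.val_zero]; omega)
        have hi1 : i ≠ 1 := Fin.ne_of_val_ne (by rw [Fin.val_one]; omega)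
        simp only [AddMonoidHom.mem_ker, SetLike.mem_coe, map_sub, map_zsmul,
          psiD_single, smul_eq_mul]
        simp [hi0, hi1]
        ring
    intro x hx
    exact AddMonoidHom.mem_ker.1 (hle hx)
  -- τ vanishes on R
  have hτker : ∀ x ∈ R, tauD n x = 0 := by
    rw [hR]
    have h2z : ((2 : ℤ) : ZMod 2) = 0 := by decide
    have hle : AddSubgroup.closure
        ({g₀} ∪ {x | ∃ i : Fin (n + 2), 2 ≤ (i : ℕ) ∧
          x = Pi.single 0 1 - (2 : ℤ) • Pi.single i 1}) ≤ (tauD n).ker := by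
      rw [AddSubgroup.closure_le]
      rintro x (hx | ⟨i, hi2, rfl⟩)
      · rw [Set.mem_singleton_iff] at hx
        subst hx
        simp only [AddMonoidHom.mem_ker, SetLike.mem_coe, tauD, AddMonoidHom.mk'_apply, hg₀,
          Pi.sub_apply, Pi.add_apply, Pi.smul_apply, smul_eq_mul,
          Pi.single_eq_of_ne h30, Pi.single_eq_of_ne h31, Pi.single_eq_of_ne h32]
        norm_num
      · simp only [AddMonoidHom.mem_ker, SetLike.mem_coe, tauD, AddMonoidHom.mk'_apply,
          Pi.sub_apply, Pi.smul_apply, smul_eq_mul, Pi.single_eq_of_ne h30]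
        push_cast
        rw [show ((2:ZMod 2)) = 0 from rfl]
        ring
    intro x hx
    exact AddMonoidHom.mem_ker.1 (hle hx)
  -- evaluation of S₁
  have happ : ∀ j : Fin (n+2), S₁ j = if j = 0 then 0 else 1 := by
    intro j
    rw [hS₁, Finset.sum_apply]
    simp only [Pi.single_apply]
    rw [Finset.sum_ite_eq]
    by_cases hj : j = 0 <;> simp [hj]
  have hcard : (Finset.univ \ {0} : Finset (Fin (n+2))).card = n + 1 := by
    rw [Finset.card_sdiff_of_subset (by simp)]
    simp
  have htot : (∑ i, S₁ i) = (n : ℤ) + 1 := by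
    rw [hS₁]
    simp only [Finset.sum_apply]
    rw [Finset.sum_comm]
    have : ∀ i : Fin (n+2), (∑ j, Pi.single i (1:ℤ) j) = 1 := fun i => Fintype.sum_pi_single' i 1
    rw [Finset.sum_congr rfl fun i _ => this i, Finset.sum_const, hcard]
    push_cast
    ring
  -- ψ and τ on χ₀ and A
  have hψA : psiD n ℓ A = 2 * (ℓ:ℤ) - 2 := by rw [hA, psiD_single]; simp
  have hψχ : psiD n ℓ χ₀ = 2 * (ℓ:ℤ) - 2 - (1 + ((ℓ:ℤ) - 1) * n) := by
    have hS : psiD n ℓ S₁ = 1 + ((ℓ:ℤ) - 1) * n := by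
      simp only [psiD, AddMonoidHom.mk'_apply]
      rw [htot, happ 0, happ 1, if_pos rfl, if_neg h10]
      ring
    rw [hχ₀, map_sub, hS, hψA]
  have hτA : tauD n A = 0 := by
    simp [tauD, hA, Pi.single_eq_of_ne h30]
  have hτχ : tauD n χ₀ = 1 := by
    have hcval : χ₀ 3 = -1 := by
      rw [hχ₀, Pi.sub_apply, hA, Pi.single_eq_of_ne h30, happ 3, if_neg h30]
      ring
    simp only [tauD, AddMonoidHom.mk'_apply, hcval]
    decide
  -- the T3 sum decomposition
  set T3 : Finset (Fin (n+2)) := Finset.univ \ {0, 1, 2} with hT3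
  set S3 : Fin (n+2) → ℤ := ∑ i ∈ T3, Pi.single i 1 with hS3
  have hT3card : T3.card = n - 1 := by
    rw [hT3, Finset.card_sdiff_of_subset (by simp)]
    rw [Finset.card_insert_of_notMem (by simp [h10.symm, h20.symm]),
      Finset.card_insert_of_notMem (by simp [h21.symm])]
    simp
  have hsplit : S₁ = Pi.single 1 1 + Pi.single 2 1 + S3 := by
    have hset : (Finset.univ \ {0} : Finset (Fin (n+2))) = insert 1 (insert 2 T3) := by
      ext x
      simp only [Finset.mem_sdiff, Finset.mem_univ, true_and, Finset.mem_singleton,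
        Finset.mem_insert, hT3]
      constructor
      · intro hx
        by_cases h1 : x = 1
        · exact Or.inl h1
        by_cases h2 : x = 2
        · exact Or.inr (Or.inl h2)
        · exact Or.inr (Or.inr (by simp [hx, h1, h2]))
      · rintro (rfl | rfl | hx)
        · exact h10
        · exact h20
        · simp at hx; exact hx.1
    rw [hS₁, hset, Finset.sum_insert (by simp [h21.symm, hT3]),
      Finset.sum_insert (by simp [hT3])]
    rw [← hS3]
    abel
  -- key identity
  have hc1 : ((n - 1 : ℕ) : ℤ) = (n : ℤ) - 1 := by omega
  have key : (2 * (ℓ:ℤ) - 2) • χ₀ - ((2 * (ℓ:ℤ) - 3) - ((ℓ:ℤ) - 1) * n) • A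
      = (2 : ℤ) • g₀ + ((ℓ:ℤ) - 2) • (Pi.single 0 1 - (2:ℤ) • Pi.single 2 1)
        + ∑ i ∈ T3, ((ℓ:ℤ) - 1) • (Pi.single 0 1 - (2:ℤ) • Pi.single i 1) := by
    have hsum : ∑ i ∈ T3, ((ℓ:ℤ) - 1) • ((Pi.single 0 1 : Fin (n+2) → ℤ)
          - (2:ℤ) • Pi.single i 1)
        = ((n : ℤ) - 1) • (((ℓ:ℤ) - 1) • A) - (2 * ((ℓ:ℤ) - 1)) • S3 := by
      rw [hS3, Finset.smul_sum]
      rw [show (∑ i ∈ T3, ((ℓ:ℤ) - 1) • ((Pi.single 0 1 : Fin (n+2) → ℤ)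
            - (2:ℤ) • Pi.single i 1))
          = ∑ i ∈ T3, (((ℓ:ℤ) - 1) • A - (2 * ((ℓ:ℤ) - 1)) • Pi.single i 1) from
        Finset.sum_congr rfl fun i _ => by rw [smul_sub, smul_smul, hA]; ring_nf]
      rw [Finset.sum_sub_distrib, Finset.sum_const, hT3card]
      rw [show ((n-1 : ℕ) • (((ℓ:ℤ) - 1) • A)) = ((n - 1 : ℕ) : ℤ) • (((ℓ:ℤ) - 1) • A) from
        (natCast_zsmul _ _).symm, hc1]
    rw [hχ₀, hsplit, hsum, hg₀, hA]
    module
  -- membership of the key element in R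
  have hg₀mem : g₀ ∈ R := by
    rw [hR]; exact AddSubgroup.subset_closure (Set.mem_union_left _ rfl)
  have hgimem : ∀ i : Fin (n+2), 2 ≤ (i : ℕ) →
      ((Pi.single 0 1 : Fin (n+2) → ℤ) - (2:ℤ) • Pi.single i 1) ∈ R := by
    intro i hi
    rw [hR]; exact AddSubgroup.subset_closure (Set.mem_union_right _ ⟨i, hi, rfl⟩)
  have hmem : (2 * (ℓ:ℤ) - 2) • χ₀ - ((2 * (ℓ:ℤ) - 3) - ((ℓ:ℤ) - 1) * n) • A ∈ R := by
    rw [key]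
    refine add_mem (add_mem (zsmul_mem hg₀mem 2) (zsmul_mem (hgimem 2 hv2.ge) _)) ?_
    refine sum_mem (fun i hi => ?_)
    have hi' : i ∉ ({0, 1, 2} : Finset (Fin (n+2))) := (Finset.mem_sdiff.1 hi).2
    simp only [Finset.mem_insert, Finset.mem_singleton, not_or] at hi'
    have hival : 2 ≤ (i : ℕ) := by
      have h0 : (i : ℕ) ≠ 0 := fun h => hi'.1 (Fin.ext (by simp [h]))
      have h1 : (i : ℕ) ≠ 1 := fun h => hi'.2.1 (Fin.ext (by simp [h, Fin.val_one]))
      omega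
    exact zsmul_mem (hgimem i hival) _
  -- part 1
  have part1 : (QuotientAddGroup.mk ((2 * ℓ - 2 : ℤ) • χ₀) : (Fin (n + 2) → ℤ) ⧸ R) =
      ((2 * ℓ - 3 : ℤ) - (ℓ - 1 : ℤ) * n) • (QuotientAddGroup.mk A) := by
    rw [← QuotientAddGroup.mk_zsmul]
    exact QuotientAddGroup.eq.2 (by simpa [neg_sub, sub_eq_neg_add] using neg_mem hmem)
  refine ⟨part1, ⟨⟨by omega, ((2 * ℓ - 3 : ℤ) - (ℓ - 1 : ℤ) * n), ?_⟩, ?_⟩⟩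
  · have hcast : (((2 * ℓ - 2 : ℕ) : ℤ)) = 2 * (ℓ:ℤ) - 2 := by omega
    rw [hcast]
    exact part1
  · rintro k ⟨hkpos, u, hu⟩
    rw [← QuotientAddGroup.mk_zsmul] at hu
    have hmem2 : -((k:ℤ) • χ₀) + u • A ∈ R := QuotientAddGroup.eq.1 hu
    have hψ0 : psiD n ℓ (-((k:ℤ) • χ₀) + u • A) = 0 := hψker _ hmem2
    have hτ0 : tauD n (-((k:ℤ) • χ₀) + u • A) = 0 := hτker _ hmem2
    rw [map_add, map_neg, map_zsmul, map_zsmul, hψχ, hψA, smul_eq_mul, smul_eq_mul] at hψ0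
    rw [map_add, map_neg, map_zsmul, map_zsmul, hτχ, hτA, smul_zero, add_zero,
      zsmul_eq_mul, mul_one] at hτ0
    have hk2 : 2 ∣ k := by
      have : ((k : ℕ) : ZMod 2) = 0 := by
        have := neg_eq_zero.1 hτ0
        push_cast at this
        exact_mod_cast this
      exact (ZMod.natCast_eq_zero_iff k 2).1 this
    obtain ⟨j, rfl⟩ := hk2
    have heq : ((2 * j : ℕ) : ℤ) * (2 * (ℓ:ℤ) - 2 - (1 + ((ℓ:ℤ) - 1) * n)) = u * (2 * (ℓ:ℤ) - 2) := by
      linarith [hψ0]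
    have heq2 : (j : ℤ) * (2 * (ℓ:ℤ) - 3 - ((ℓ:ℤ) - 1) * n) = u * ((ℓ:ℤ) - 1) := by
      have h2 : (2:ℤ) * ((j : ℤ) * (2 * (ℓ:ℤ) - 3 - ((ℓ:ℤ) - 1) * n))
          = 2 * (u * ((ℓ:ℤ) - 1)) := by push_cast at heq ⊢; linarith
      exact mul_left_cancel₀ two_ne_zero h2
    have hdvd : ((ℓ:ℤ) - 1) ∣ (j : ℤ) := by
      refine ⟨2 * (j:ℤ) - 2 * m' * (j:ℤ) - u, ?_⟩
      have hn'' : (n : ℤ) = 2 * m' := by omega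
      linear_combination (-1 : ℤ) * heq2 - (j:ℤ) * ((ℓ:ℤ) - 1) * hn''
    have hjpos : (0:ℤ) < j := by exact_mod_cast (by omega : 0 < j)
    have hle : (ℓ:ℤ) - 1 ≤ (j:ℤ) := Int.le_of_dvd hjpos hdvd
    omega
end

section
/- Let n ≥ 1 and let Γ = { (t₀,…,t_{n+1}) ∈ (ℂ*)^{n+2} : t₁⁵ = t₂³ = t₃² = ⋯ = t_{n+1}² = t₀t₁⋯t_{n+1} }. The set of γ = (t₀,…,t_{n+1}) ∈ Γ with t₁⁵ = 1 (i.e. γ ∈ ker χ) satisfying t_i ≠ 1 for all i ∈ {0,…,n+1} has exactly 8 elements, namely those with t₁ ∈ μ₅∖{1}, t₂ ∈ μ₃∖{1}, t₃ = ⋯ = t_{n+1} = −1, and t₀ = (−1)^{n−1}(t₁t₂)⁻¹. -/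
/-!
Once `t₁⁵ = 1`, the relations give `t₂³ = 1` and `tᵢ² = 1` for `i ≥ 3`, so `tᵢ = -1` there, and
the product relation solves for `t₀`. The condition `t₀ ≠ 1` is then automatic: otherwise
`t₁t₂ = ±1`, raising to the odd power `15` forces the sign `+`, and `t₁ = t₂⁻¹` has order
dividing `gcd(5, 3) = 1`. So the sectors are parametrised by `(t₁, t₂) ∈ (μ₅∖1) × (μ₃∖1)`,
which has `4 · 2 = 8` elements.
-/

theorem Fin.eq_zero_or_eq_one_or_eq_two_or_three_le {m : ℕ} (i : Fin (m + 3)) :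
    i = 0 ∨ i = 1 ∨ i = 2 ∨ 3 ≤ (i : ℕ) := by
  obtain ⟨_ | _ | _ | k, hk⟩ := i <;> simp [Fin.ext_iff, Nat.mod_eq_of_lt]

theorem Fin.prod_univ_add_three_of_forall_three_le {M : Type*} [CommMonoid M] {m : ℕ} {c : M}
    (t : Fin (m + 3) → M) (ht : ∀ i : Fin (m + 3), 3 ≤ (i : ℕ) → t i = c) :
    ∏ i, t i = t 0 * t 1 * t 2 * c ^ m := by
  rw [Fin.prod_univ_succ, Fin.prod_univ_succ, Fin.prod_univ_succ,
    Finset.prod_congr rfl fun j _ => ht _ (by simp), Finset.prod_const, Finset.card_univ,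
    Fintype.card_fin]
  simp only [Fin.succ_zero_eq_one, Fin.succ_one_eq_two, mul_assoc]

theorem Units.eq_neg_one_of_sq_eq_one {R : Type*} [Ring R] [NoZeroDivisors R] {x : Rˣ}
    (h : x ^ 2 = 1) (hx : x ≠ 1) : x = -1 := by
  have : (x : R) ^ 2 = 1 := by rw [← Units.val_pow_eq_pow_val, h, Units.val_one]
  rcases sq_eq_one_iff.mp this with h1 | h1
  · exact absurd (Units.ext h1) hx
  · exact Units.ext h1

theorem eq_one_of_mul_eq_of_sq_eq_one {G : Type*} [CommGroup G] {p q : ℕ} (hpq : p.Coprime q)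
    (hodd : Odd (p * q)) {x y ε : G} (hx : x ^ p = 1) (hy : y ^ q = 1) (hε : ε ^ 2 = 1)
    (h : x * y = ε) : x = 1 := by
  obtain ⟨k, hk⟩ := hodd
  have hε1 : ε = 1 := by
    calc ε = ε ^ (p * q) := by rw [hk, pow_succ, pow_mul, hε, one_pow, one_mul]
      _ = 1 := by rw [← h, mul_pow, pow_mul, hx, one_pow, one_mul, mul_comm, pow_mul, hy, one_pow]
  have hxy : x = y⁻¹ := eq_inv_of_mul_eq_one_left (h.trans hε1)
  exact (pow_eq_one_iff_of_coprime hpq).mp ⟨hx, by rw [hxy, inv_pow, hy, inv_one]⟩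

theorem Complex.ncard_setOf_pow_eq_one_and_ne_one (k : ℕ) [NeZero k] :
    {x : ℂˣ | x ^ k = 1 ∧ x ≠ 1}.ncard = k - 1 := by
  have : {x : ℂˣ | x ^ k = 1 ∧ x ≠ 1} = (rootsOfUnity k ℂ : Set ℂˣ) \ {1} := by
    ext x; simp
  rw [this, Set.ncard_sdiff_singleton_of_mem (one_mem _), ← Nat.card_coe_set_eq,
    SetLike.coe_sort_coe, Complex.card_rootsOfUnity]

/-- Indexed by `m = n - 1`, so that `0, 1, 2` are distinct in `Fin (m + 3)`. -/
def e8TwistedSectors (m : ℕ) : Set (Fin (m + 3) → ℂˣ) :=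
  {t | t 1 ^ 5 = 1 ∧ t 1 ≠ 1 ∧ t 2 ^ 3 = 1 ∧ t 2 ≠ 1 ∧
    (∀ i : Fin (m + 3), 3 ≤ (i : ℕ) → t i = -1) ∧ t 0 = (-1 : ℂˣ) ^ m * (t 1 * t 2)⁻¹}

theorem setOf_twistedSector_eq_e8TwistedSectors (m : ℕ) :
    {t : Fin (m + 3) → ℂˣ | t 1 ^ 5 = t 2 ^ 3 ∧
      (∀ i : Fin (m + 3), 3 ≤ (i : ℕ) → t i ^ 2 = t 1 ^ 5) ∧
      (∏ i, t i) = t 1 ^ 5 ∧ t 1 ^ 5 = 1 ∧ ∀ i, t i ≠ 1} = e8TwistedSectors m := by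
  ext t
  simp only [e8TwistedSectors, Set.mem_ofPred_eq]
  constructor
  · rintro ⟨h52, hsq, hprod, h5, hne⟩
    have htail : ∀ i : Fin (m + 3), 3 ≤ (i : ℕ) → t i = -1 := fun i hi =>
      Units.eq_neg_one_of_sq_eq_one (by rw [hsq i hi, h5]) (hne i)
    rw [Fin.prod_univ_add_three_of_forall_three_le t htail, h5] at hprod
    refine ⟨h5, hne 1, h52 ▸ h5, hne 2, htail, ?_⟩
    rw [mul_assoc, mul_assoc, ← mul_assoc (t 1)] at hprod
    rw [eq_inv_of_mul_eq_one_left hprod, mul_inv_rev, ← inv_pow, inv_neg_one]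
  · rintro ⟨h5, h1, h3, h2, htail, h0⟩
    have hprod : ∏ i, t i = 1 := by
      rw [Fin.prod_univ_add_three_of_forall_three_le t htail, mul_assoc (t 0), h0, inv_mul_cancel_right, ← mul_pow, neg_one_mul, neg_neg, one_pow]
    have h0ne : t 0 ≠ 1 := by
      rw [Ne, h0, mul_inv_eq_one]
      intro h
      exact h1 (eq_one_of_mul_eq_of_sq_eq_one (by norm_num : Nat.Coprime 5 3) (by decide) h5 h3
        (by rw [← pow_mul, mul_comm, pow_mul, neg_one_sq, one_pow]) h.symm)
    refine ⟨h5.trans h3.symm, fun i hi => by rw [htail i hi, h5, neg_one_sq], hprod.trans h5.symm,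
      h5, fun i => ?_⟩
    rcases Fin.eq_zero_or_eq_one_or_eq_two_or_three_le i with rfl | rfl | rfl | hi
    · exact h0ne
    · exact h1
    · exact h2
    · exact htail i hi ▸ neg_units_ne_self 1

theorem injOn_e8TwistedSectors (m : ℕ) :
    Set.InjOn (fun t : Fin (m + 3) → ℂˣ => (t 1, t 2)) (e8TwistedSectors m) := by
  rintro t ⟨-, -, -, -, ht, ht0⟩ s ⟨-, -, -, -, hs, hs0⟩ hts
  obtain ⟨h1, h2⟩ := Prod.mk.inj hts
  funext i
  rcases Fin.eq_zero_or_eq_one_or_eq_two_or_three_le i with rfl | rfl | rfl | hi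
  · rw [ht0, hs0, h1, h2]
  · exact h1
  · exact h2
  · rw [ht i hi, hs i hi]

theorem image_e8TwistedSectors (m : ℕ) :
    (fun t : Fin (m + 3) → ℂˣ => (t 1, t 2)) '' e8TwistedSectors m =
      {a : ℂˣ | a ^ 5 = 1 ∧ a ≠ 1} ×ˢ {b : ℂˣ | b ^ 3 = 1 ∧ b ≠ 1} := by
  ext ⟨a, b⟩
  constructor
  · rintro ⟨t, ⟨h5, h1, h3, h2, -, -⟩, hab⟩
    obtain ⟨rfl, rfl⟩ := Prod.mk.inj hab
    exact ⟨⟨h5, h1⟩, h3, h2⟩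
  · rintro ⟨⟨h5, h1⟩, h3, h2⟩
    let t : Fin (m + 3) → ℂˣ := fun i =>
      if i = 0 then (-1) ^ m * (a * b)⁻¹ else if i = 1 then a else if i = 2 then b else -1
    have ht1 : t 1 = a := by simp [t]
    have ht2 : t 2 = b := by
      have h20 : (2 : Fin (m + 3)) ≠ 0 := by simp [Fin.ext_iff, Nat.mod_eq_of_lt]
      have h21 : (2 : Fin (m + 3)) ≠ 1 := by simp [Fin.ext_iff, Nat.mod_eq_of_lt]
      simp only [t, if_neg h20, if_neg h21, if_true]
    have htail (i : Fin (m + 3)) (hi : 3 ≤ (i : ℕ)) : t i = -1 := by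
      obtain ⟨hi0, hi1, hi2⟩ : i ≠ 0 ∧ i ≠ 1 ∧ i ≠ 2 := by
        refine ⟨?_, ?_, ?_⟩ <;> rintro rfl <;> simp [Nat.mod_eq_of_lt] at hi
      simp only [t, if_neg hi0, if_neg hi1, if_neg hi2]
    refine ⟨t, ⟨ht1 ▸ h5, ht1 ▸ h1, ht2 ▸ h3, ht2 ▸ h2, htail, ?_⟩, Prod.ext ht1 ht2⟩
    rw [ht1, ht2]
    simp [t]

theorem ncard_e8TwistedSectors (m : ℕ) : (e8TwistedSectors m).ncard = 8 := by
  rw [← (injOn_e8TwistedSectors m).ncard_image, image_e8TwistedSectors, Set.ncard_prod,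
    Complex.ncard_setOf_pow_eq_one_and_ne_one, Complex.ncard_setOf_pow_eq_one_and_ne_one]

/-- The set of `γ = (t₀,…,t_{n+1})` in the type `E₈` symmetry group
`Γ = { t : t₁⁵ = t₂³ = t₃² = ⋯ = t_{n+1}² = t₀t₁⋯t_{n+1} }` lying in `ker χ`
(i.e. `t₁⁵ = 1`) with `tᵢ ≠ 1` for all `i` has exactly `8` elements, namely those with
`t₁ ∈ μ₅∖{1}`, `t₂ ∈ μ₃∖{1}`, `t₃ = ⋯ = t_{n+1} = −1`, `t₀ = (−1)^{n−1}(t₁t₂)⁻¹`. -/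
theorem twisted_sector_count_type_E8 (n : ℕ) (hn : 1 ≤ n)
    (S : Set (Fin (n + 2) → ℂˣ))
    (hS : S = {t | t 1 ^ 5 = t 2 ^ 3 ∧
        (∀ i : Fin (n + 2), 3 ≤ (i : ℕ) → t i ^ 2 = t 1 ^ 5) ∧
        (∏ i, t i) = t 1 ^ 5 ∧ t 1 ^ 5 = 1 ∧ ∀ i, t i ≠ 1}) :
    S.ncard = 8 ∧
    S = {t | t 1 ^ 5 = 1 ∧ t 1 ≠ 1 ∧ t 2 ^ 3 = 1 ∧ t 2 ≠ 1 ∧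
        (∀ i : Fin (n + 2), 3 ≤ (i : ℕ) → t i = -1) ∧
        t 0 = (-1 : ℂˣ) ^ (n - 1) * (t 1 * t 2)⁻¹} := by
  obtain ⟨m, rfl⟩ := Nat.exists_eq_add_of_le' hn
  have hS' : S = e8TwistedSectors m := hS.trans (setOf_twistedSector_eq_e8TwistedSectors m)
  exact ⟨hS' ▸ ncard_e8TwistedSectors m, hS'⟩
end
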